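/- The arc length of a Bezier curve is at most the total length of its control polygon: ∫_0^1 ‖b'(s)‖ ds ≤ Σ_{i=0}^{k-1} ‖γ_{i+1} − γ_i‖, where ‖·‖ is the Euclidean norm on ℝ^n. -/

import Mathlib

/-!
Since `b'(s) = ∑ᵢ B_{k-1,i}(s) • k(γᵢ₊₁ - γᵢ)` with nonnegative Bernstein weights, the triangle
inequality bounds `‖b'(s)‖` by `∑ᵢ B_{k-1,i}(s) k ‖γᵢ₊₁ - γᵢ‖`. Every Bernstein polynomial of
degree `m` has integral `1/(m+1)` over `[0,1]`: the identity
`(B_{m+1,ν+1})' = (m+1)(B_{m,ν} - B_{m,ν+1})`, with `B_{m+1,ν+1}` vanishing at both endpoints, shows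
that these integrals do not depend on `ν`, and they sum to `1` because the `B_{m,ν}` do.
-/

open Polynomial intervalIntegral

theorem Polynomial.integral_eval_derivative (p : ℝ[X]) (a b : ℝ) :
    ∫ x in a..b, p.derivative.eval x = p.eval b - p.eval a :=
  integral_eq_sub_of_hasDerivAt (fun x _ => p.hasDerivAt x)
    (p.derivative.continuous.intervalIntegrable a b)

namespace bernsteinPolynomial

theorem integral_eval_succ {n ν : ℕ} (h : ν < n) :
    ∫ x in (0 : ℝ)..1, (bernsteinPolynomial ℝ n (ν + 1)).eval x =
      ∫ x in (0 : ℝ)..1, (bernsteinPolynomial ℝ n ν).eval x := by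
  have key := (bernsteinPolynomial ℝ (n + 1) (ν + 1)).integral_eval_derivative 0 1
  simp only [derivative_succ_aux, eval_mul, eval_sub, eval_add, eval_natCast, eval_one,
    eval_at_0, eval_at_1, add_left_inj, h.ne, if_false, Nat.add_one_ne_zero, sub_zero] at key
  rw [integral_const_mul, integral_sub ((Polynomial.continuous _).intervalIntegrable _ _)
    ((Polynomial.continuous _).intervalIntegrable _ _), mul_eq_zero, sub_eq_zero] at key
  exact (key.resolve_left (by positivity)).symm

theorem integral_eval_eq_integral_eval_zero {n ν : ℕ} (h : ν ≤ n) :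
    ∫ x in (0 : ℝ)..1, (bernsteinPolynomial ℝ n ν).eval x =
      ∫ x in (0 : ℝ)..1, (bernsteinPolynomial ℝ n 0).eval x := by
  induction ν with
  | zero => rfl
  | succ ν ih => rw [integral_eval_succ h, ih (by omega)]

theorem integral_eval {n ν : ℕ} (h : ν ≤ n) :
    ∫ x in (0 : ℝ)..1, (bernsteinPolynomial ℝ n ν).eval x = ((n : ℝ) + 1)⁻¹ := by
  have hsum := congrArg (fun p : ℝ[X] => ∫ x in (0 : ℝ)..1, p.eval x) (sum ℝ n)
  simp only [eval_finsetSum, eval_one] at hsum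
  rw [integral_finsetSum fun i _ => (Polynomial.continuous _).intervalIntegrable 0 1,
    Finset.sum_congr rfl fun i hi =>
      integral_eval_eq_integral_eval_zero (Finset.mem_range_succ_iff.mp hi)] at hsum
  simp only [Finset.sum_const, Finset.card_range, nsmul_eq_mul, Nat.cast_succ,
    integral_const, sub_zero, smul_eq_mul, mul_one] at hsum
  rw [integral_eval_eq_integral_eval_zero h]
  exact eq_inv_of_mul_eq_one_right hsum

end bernsteinPolynomial

theorem intervalIntegral.integral_norm_sum_smul_le {ι E : Type*} [NormedAddCommGroup E]
    [NormedSpace ℝ E] (s : Finset ι) {w : ι → ℝ → ℝ} {a b : ℝ} (hab : a ≤ b)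
    (hw : ∀ i ∈ s, Continuous (w i)) (hw₀ : ∀ i ∈ s, ∀ x ∈ Set.Icc a b, 0 ≤ w i x) (v : ι → E) :
    ∫ x in a..b, ‖∑ i ∈ s, w i x • v i‖ ≤ ∑ i ∈ s, (∫ x in a..b, w i x) * ‖v i‖ := by
  have hterm : ∀ i ∈ s, Continuous fun x => w i x * ‖v i‖ :=
    fun i hi => (hw i hi).mul continuous_const
  calc ∫ x in a..b, ‖∑ i ∈ s, w i x • v i‖
      ≤ ∫ x in a..b, ∑ i ∈ s, w i x * ‖v i‖ := by
        refine integral_mono_on hab ?_ ((continuous_finsetSum s hterm).intervalIntegrable a b)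
          fun x hx => ?_
        · exact ((continuous_finsetSum s fun i hi => (hw i hi).smul continuous_const).norm
            ).intervalIntegrable a b
        · refine (norm_sum_le _ _).trans (Finset.sum_le_sum fun i hi => ?_)
          rw [norm_smul, Real.norm_of_nonneg (hw₀ i hi x hx)]
    _ = ∑ i ∈ s, (∫ x in a..b, w i x) * ‖v i‖ := by
        rw [integral_finsetSum fun i hi => (hterm i hi).intervalIntegrable a b]
        simp only [integral_mul_const]

/-- The arc length of a Bezier curve is at most the length of its control polygon. -/
theorem bezier_arclength_le_control_polygon (n k : ℕ)
    (γ : ℕ → EuclideanSpace ℝ (Fin n)) :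
    (∫ s in (0 : ℝ)..1,
        ‖∑ i ∈ Finset.range k,
            (((k - 1).choose i : ℝ) * (1 - s) ^ (k - 1 - i) * s ^ i) •
              ((k : ℝ) • (γ (i + 1) - γ i))‖) ≤
      ∑ i ∈ Finset.range k, ‖γ (i + 1) - γ i‖ := by
  have hbernstein : ∀ i s, ((k - 1).choose i : ℝ) * (1 - s) ^ (k - 1 - i) * s ^ i =
      (bernsteinPolynomial ℝ (k - 1) i).eval s := fun i s => by
    simp only [bernsteinPolynomial, eval_mul, eval_pow, eval_sub, eval_one, eval_X, eval_natCast]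
    ring
  calc _ ≤ ∑ i ∈ Finset.range k, (∫ s in (0 : ℝ)..1,
          ((k - 1).choose i : ℝ) * (1 - s) ^ (k - 1 - i) * s ^ i) * ‖(k : ℝ) • (γ (i + 1) - γ i)‖ :=
        integral_norm_sum_smul_le _ zero_le_one (fun i _ => by fun_prop)
          (fun i _ s hs => mul_nonneg (mul_nonneg (Nat.cast_nonneg _)
            (pow_nonneg (sub_nonneg.2 hs.2) _)) (pow_nonneg hs.1 _)) _
    _ = ∑ i ∈ Finset.range k, ‖γ (i + 1) - γ i‖ := Finset.sum_congr rfl fun i hi => by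
        have hik := Finset.mem_range.mp hi
        have hk : ((k - 1 : ℕ) : ℝ) + 1 = k := by
          rw [Nat.cast_sub (by omega), Nat.cast_one, sub_add_cancel]
        simp only [hbernstein, bernsteinPolynomial.integral_eval (by omega : i ≤ k - 1), hk,
          norm_smul, Real.norm_natCast]
        rw [← mul_assoc, inv_mul_cancel₀ (Nat.cast_ne_zero.2 (by omega)), one_mul]
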